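/- Let f be a continuous risk-neutral density of log S_T with ∫_0^∞ e^x f(x)dx < ∞, and for a grid of strikes Δ = {log K_1,...,log K_q} define market prices C̃_i, P̃_i via the discounted payoff integrals against f, and estimated prices Ĉ_i, P̂_i as the discounted payoff integrals against the piecewise constant density f_Δ minimizing the least squares criterion among nonnegative step densities on the extended grid. Then as K_1 → 0, K_q → ∞, q → ∞, and the mesh |Δ| = max_i log(K_{i+1}/K_i) → 0, the average squared pricing error (1/(2q))[Σ_{i=1}^q (Ĉ_i − C̃_i)² + Σ_{i=1}^q (P̂_i − P̃_i)²] converges to 0. -/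

import Mathlib

/-!
The least squares estimator does at least as well as any admissible competitor, so it suffices
to exhibit, for each grid, a step density whose pricing errors are uniformly small. Take the
one carrying the mass of `f` on each cell of the log-strike grid, the two outer cells extended
to `-∞` and `+∞`. Since the masses agree, the strike drops out and every call or put pricing
error is bounded by the sum over the cells of the discrepancies between the first moments
`∫ exp y`. These are at most `K_1` on the first cell, `c` times the tail
`∫_{log K_q}^∞ e^y f(y) dy` on the last one, and `e^{|Δ|} - 1` times the first moment on
the others: all three vanish in the limit.
-/

open MeasureTheory Filter Set Real Function

lemma exp_mul_sub_le_exp_sub_exp (u v : ℝ) : exp u * (v - u) ≤ exp v - exp u := by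
  have h : exp v = exp u * exp (v - u) := by rw [← exp_add, add_sub_cancel]
  nlinarith [add_one_le_exp (v - u), exp_pos u]

lemma exp_sub_exp_le_exp_mul_sub (u v : ℝ) : exp v - exp u ≤ exp v * (v - u) := by
  have h : exp u = exp v * exp (u - v) := by rw [← exp_add, add_sub_cancel]
  nlinarith [add_one_le_exp (u - v), exp_pos v]

lemma setIntegral_eq_sum_setIntegral_inter {α ι : Type*} [MeasurableSpace α] [Fintype ι]
    {μ : Measure α} {S : ι → Set α} (hS : ∀ l, MeasurableSet (S l))
    (hdisj : Pairwise (Disjoint on S)) (hcover : ⋃ l, S l = univ) {A : Set α} {φ : α → ℝ}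
    (hφ : IntegrableOn φ A μ) : ∫ x in A, φ x ∂μ = ∑ l, ∫ x in S l ∩ A, φ x ∂μ := by
  have h := integral_iUnion_fintype (μ := μ.restrict A) hS hdisj fun l => hφ.integrableOn
  simpa only [hcover, Measure.restrict_univ, Measure.restrict_restrict (hS _)] using h

lemma integral_eq_sum_setIntegral {α ι : Type*} [MeasurableSpace α] [Fintype ι]
    {μ : Measure α} {S : ι → Set α} (hS : ∀ l, MeasurableSet (S l))
    (hdisj : Pairwise (Disjoint on S)) (hcover : ⋃ l, S l = univ) {φ : α → ℝ}
    (hφ : Integrable φ μ) : ∫ x, φ x ∂μ = ∑ l, ∫ x in S l, φ x ∂μ := by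
  rw [← setIntegral_univ,
    setIntegral_eq_sum_setIntegral_inter hS hdisj hcover hφ.integrableOn]
  simp only [inter_univ]

section Cell

variable {f : ℝ → ℝ} {s : Set ℝ}

lemma exp_mul_setIntegral_le (hf0 : ∀ x, 0 ≤ f x) (hfi : Integrable f)
    (hfe : Integrable fun y => exp y * f y) (hs : MeasurableSet s) {a : ℝ}
    (ha : ∀ y ∈ s, a ≤ y) : exp a * ∫ y in s, f y ≤ ∫ y in s, exp y * f y := by
  rw [← integral_const_mul]
  exact setIntegral_mono_on (hfi.integrableOn.const_mul _) hfe.integrableOn hs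
    fun y hy => mul_le_mul_of_nonneg_right (exp_le_exp.2 (ha y hy)) (hf0 y)

lemma setIntegral_exp_mul_le (hf0 : ∀ x, 0 ≤ f x) (hfi : Integrable f)
    (hfe : Integrable fun y => exp y * f y) (hs : MeasurableSet s) {a : ℝ}
    (ha : ∀ y ∈ s, y ≤ a) : ∫ y in s, exp y * f y ≤ exp a * ∫ y in s, f y := by
  rw [← integral_const_mul]
  exact setIntegral_mono_on hfe.integrableOn (hfi.integrableOn.const_mul _) hs
    fun y hy => mul_le_mul_of_nonneg_right (exp_le_exp.2 (ha y hy)) (hf0 y)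

/-- The first moment `b * (exp v - exp u) = ∫ y in Ioc u v, exp y * b` of the step value `b`
on `(u, v]`, minus that of `f` on the cell `s`. -/
noncomputable def cellGap (f : ℝ → ℝ) (s : Set ℝ) (u v b : ℝ) : ℝ :=
  b * (exp v - exp u) - ∫ y in s, exp y * f y

variable {u v b : ℝ}

lemma exp_mul_le_mul_exp_sub_exp (hb0 : 0 ≤ b) (hb : b * (v - u) = ∫ y in s, f y) :
    exp u * ∫ y in s, f y ≤ b * (exp v - exp u) := by
  rw [← hb, mul_left_comm]
  exact mul_le_mul_of_nonneg_left (exp_mul_sub_le_exp_sub_exp u v) hb0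

lemma mul_exp_sub_exp_le_exp_mul (hb0 : 0 ≤ b) (hb : b * (v - u) = ∫ y in s, f y) :
    b * (exp v - exp u) ≤ exp v * ∫ y in s, f y := by
  rw [← hb, mul_left_comm]
  exact mul_le_mul_of_nonneg_left (exp_sub_exp_le_exp_mul_sub u v) hb0

lemma abs_cellGap_le_of_subset_Iic (hf0 : ∀ x, 0 ≤ f x) (hfi : Integrable f)
    (hfe : Integrable fun y => exp y * f y) (hs : MeasurableSet s) (hb0 : 0 ≤ b)
    (hb : b * (v - u) = ∫ y in s, f y) (hsv : s ⊆ Iic v) :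
    |cellGap f s u v b| ≤ exp v * ∫ y in s, f y := by
  have hF : 0 ≤ ∫ y in s, f y := setIntegral_nonneg hs fun y _ => hf0 y
  exact abs_sub_le_of_nonneg_of_le
    ((mul_nonneg (exp_pos u).le hF).trans (exp_mul_le_mul_exp_sub_exp hb0 hb))
    (mul_exp_sub_exp_le_exp_mul hb0 hb)
    (setIntegral_nonneg hs fun y _ => mul_nonneg (exp_pos y).le (hf0 y))
    (setIntegral_exp_mul_le hf0 hfi hfe hs fun _ hy => hsv hy)

lemma abs_cellGap_le_of_subset_Icc (hf0 : ∀ x, 0 ≤ f x) (hfi : Integrable f)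
    (hfe : Integrable fun y => exp y * f y) (hs : MeasurableSet s) (hb0 : 0 ≤ b)
    (hb : b * (v - u) = ∫ y in s, f y) (hsuv : s ⊆ Icc u v) (huv : u ≤ v) :
    |cellGap f s u v b| ≤ (exp (v - u) - 1) * ∫ y in s, exp y * f y := by
  have hlow := exp_mul_setIntegral_le hf0 hfi hfe hs fun _ hy => (hsuv hy).1
  have hhigh := setIntegral_exp_mul_le hf0 hfi hfe hs fun _ hy => (hsuv hy).2
  have hstep_low := exp_mul_le_mul_exp_sub_exp hb0 hb
  have hstep_high := mul_exp_sub_exp_le_exp_mul hb0 hb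
  calc |cellGap f s u v b| ≤ exp v * (∫ y in s, f y) - exp u * ∫ y in s, f y := by
        rw [cellGap, abs_sub_le_iff]
        constructor <;> linarith
    _ = (exp (v - u) - 1) * (exp u * ∫ y in s, f y) := by
        rw [exp_sub]; field_simp
    _ ≤ (exp (v - u) - 1) * ∫ y in s, exp y * f y :=
        mul_le_mul_of_nonneg_left hlow (by simpa using huv)

lemma abs_cellGap_le_of_subset_Ici (hf0 : ∀ x, 0 ≤ f x) (hfi : Integrable f)
    (hfe : Integrable fun y => exp y * f y) (hs : MeasurableSet s) (hb0 : 0 ≤ b)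
    (hb : b * (v - u) = ∫ y in s, f y) (hus : s ⊆ Ici u) (huv : u ≤ v) :
    |cellGap f s u v b| ≤ exp (v - u) * ∫ y in s, exp y * f y := by
  have hF : 0 ≤ ∫ y in s, f y := setIntegral_nonneg hs fun y _ => hf0 y
  have hG : 0 ≤ ∫ y in s, exp y * f y :=
    setIntegral_nonneg hs fun y _ => mul_nonneg (exp_pos y).le (hf0 y)
  have hstep_high : b * (exp v - exp u) ≤ exp (v - u) * ∫ y in s, exp y * f y := by
    refine (mul_exp_sub_exp_le_exp_mul hb0 hb).trans ?_
    rw [show exp v = exp (v - u) * exp u by rw [← exp_add, sub_add_cancel], mul_assoc]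
    exact mul_le_mul_of_nonneg_left (exp_mul_setIntegral_le hf0 hfi hfe hs fun _ hy => hus hy)
      (exp_pos _).le
  exact abs_sub_le_of_nonneg_of_le
    ((mul_nonneg (exp_pos u).le hF).trans (exp_mul_le_mul_exp_sub_exp hb0 hb)) hstep_high hG
    (le_mul_of_one_le_left hG (one_le_exp (sub_nonneg.2 huv)))

end Cell

section StepDensity

variable {ι : Type*} [Fintype ι]

noncomputable def stepDensity (u v b : ι → ℝ) (y : ℝ) : ℝ :=
  ∑ l, (Ioc (u l) (v l)).indicator (fun _ => b l) y

lemma setIntegral_mul_stepDensity (u v b : ι → ℝ) {h : ℝ → ℝ} (hh : Continuous h)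
    (A : Set ℝ) :
    ∫ y in A, h y * stepDensity u v b y = ∑ l, b l * ∫ y in A ∩ Ioc (u l) (v l), h y := by
  have hsplit : ∀ y, h y * stepDensity u v b y =
      ∑ l, (Ioc (u l) (v l)).indicator (fun z => b l * h z) y := by
    intro y
    simp only [stepDensity, Finset.mul_sum, indicator_apply]
    refine Finset.sum_congr rfl fun l _ => ?_
    split_ifs <;> ring
  have hint : ∀ l, IntegrableOn
      (fun y => (Ioc (u l) (v l)).indicator (fun z => b l * h z) y) A := fun l =>
    ((continuous_const.mul hh).integrableOn_Ioc.integrable_indicator measurableSet_Ioc).integrableOn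
  simp_rw [hsplit]
  rw [integral_finsetSum _ fun l _ => hint l]
  refine Finset.sum_congr rfl fun l _ => ?_
  rw [setIntegral_indicator measurableSet_Ioc, integral_const_mul]

variable {f : ℝ → ℝ} {S : ι → Set ℝ} {u v b : ι → ℝ}

lemma mul_setIntegral_Ioc_sub_setIntegral_eq_cellGap (hfi : Integrable f)
    (hfe : Integrable fun y => exp y * f y) {s : Set ℝ} {u v b : ℝ} (huv : u ≤ v)
    (hb : b * (v - u) = ∫ y in s, f y) (κ : ℝ) :
    b * (∫ y in Ioc u v, (exp y - κ)) - ∫ y in s, (exp y - κ) * f y = cellGap f s u v b := by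
  have hcall : (fun y => (exp y - κ) * f y) = fun y => exp y * f y - κ * f y := by
    ext y; ring
  rw [← intervalIntegral.integral_of_le huv, intervalIntegral.integral_sub
    (continuous_exp.intervalIntegrable u v) intervalIntegrable_const, integral_exp,
    intervalIntegral.integral_const, smul_eq_mul, hcall,
    integral_sub hfe.integrableOn (hfi.integrableOn.const_mul κ), integral_const_mul, cellGap]
  linear_combination (-κ) * hb

lemma abs_setIntegral_stepDensity_sub_le (hfi : Integrable f)
    (hfe : Integrable fun y => exp y * f y) (hS : ∀ l, MeasurableSet (S l))
    (hdisj : Pairwise (Disjoint on S)) (hcover : ⋃ l, S l = univ) (huv : ∀ l, u l ≤ v l)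
    (hIS : ∀ l, Ioc (u l) (v l) ⊆ S l) (hb : ∀ l, b l * (v l - u l) = ∫ y in S l, f y)
    {A : Set ℝ} (hAS : ∀ l, S l ⊆ A ∨ Disjoint (S l) A) (κ : ℝ) :
    |(∫ y in A, (exp y - κ) * stepDensity u v b y) - ∫ y in A, (exp y - κ) * f y| ≤
      ∑ l, |cellGap f (S l) (u l) (v l) (b l)| := by
  have hint : Integrable fun y => (exp y - κ) * f y := by
    refine (hfe.sub (hfi.const_mul κ)).congr (Eventually.of_forall fun y => ?_)
    simp only [Pi.sub_apply]
    ring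
  rw [setIntegral_mul_stepDensity u v b (h := fun y => exp y - κ) (by fun_prop),
    setIntegral_eq_sum_setIntegral_inter hS hdisj hcover hint.integrableOn,
    ← Finset.sum_sub_distrib]
  refine (Finset.abs_sum_le_sum_abs _ _).trans (Finset.sum_le_sum fun l _ => ?_)
  rcases hAS l with hsub | hdis
  · rw [inter_eq_right.2 ((hIS l).trans hsub), inter_eq_left.2 hsub,
      mul_setIntegral_Ioc_sub_setIntegral_eq_cellGap hfi hfe (huv l) (hb l)]
  · rw [(hdis.mono_left (hIS l)).symm.inter_eq, hdis.inter_eq, setIntegral_empty,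
      setIntegral_empty, mul_zero, sub_zero, abs_zero]
    exact abs_nonneg _

end StepDensity

section Grid

variable {Q : ℕ} (T : Fin (Q + 2) → ℝ)

def gridCell (l : Fin (Q + 1)) : Set ℝ :=
  {y | (l = 0 ∨ T l.castSucc < y) ∧ (l = Fin.last Q ∨ y ≤ T l.succ)}

variable {T}

lemma measurableSet_gridCell (l : Fin (Q + 1)) : MeasurableSet (gridCell T l) := by
  unfold gridCell; measurability

lemma Ioc_subset_gridCell (l : Fin (Q + 1)) : Ioc (T l.castSucc) (T l.succ) ⊆ gridCell T l :=
  fun _ hy => ⟨Or.inr hy.1, Or.inr hy.2⟩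

lemma gridCell_last (hQ : Q ≠ 0) : gridCell T (Fin.last Q) = Ioi (T (Fin.last Q).castSucc) := by
  ext y
  simp [gridCell, Fin.ext_iff, hQ]

lemma iUnion_gridCell : ⋃ l, gridCell T l = univ := by
  refine eq_univ_of_forall fun y => mem_iUnion.2 ?_
  set s := Finset.univ.filter fun l : Fin (Q + 1) => l = 0 ∨ T l.castSucc < y
  have hs : s.Nonempty := ⟨0, by simp [s]⟩
  refine ⟨s.max' hs, (Finset.mem_filter.1 (s.max'_mem hs)).2, ?_⟩
  by_contra! h
  obtain ⟨hlast, hlt⟩ := h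
  have hnext : ((s.max' hs).castPred hlast).succ ∈ s := by
    simp only [s, Finset.mem_filter, Finset.mem_univ, true_and]
    right
    rwa [← Fin.succ_castSucc, Fin.castSucc_castPred]
  have := s.le_max' _ hnext
  conv_rhs at this => rw [← Fin.castSucc_castPred _ hlast]
  exact Fin.castSucc_lt_succ.not_ge this

lemma pairwise_disjoint_gridCell (hT : Monotone T) : Pairwise (Disjoint on gridCell T) := by
  refine (pairwise_disjoint_on _).2 fun m n hmn => disjoint_left.2 fun y hym hyn => ?_
  have h1 : y ≤ T m.succ := hym.2.resolve_left (Fin.ne_last_of_lt hmn)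
  have h2 : T n.castSucc < y := hyn.1.resolve_left (Fin.ne_zero_of_lt hmn)
  have h3 : T m.succ ≤ T n.castSucc := hT (Fin.succ_le_castSucc_iff.2 hmn)
  linarith

lemma gridCell_subset_Ioi_or_disjoint (hT : Monotone T) (i : Fin Q) (l : Fin (Q + 1)) :
    gridCell T l ⊆ Ioi (T i.succ.castSucc) ∨
      Disjoint (gridCell T l) (Ioi (T i.succ.castSucc)) := by
  rcases le_or_gt i.succ.castSucc l.castSucc with h | h
  · have hl : l ≠ 0 := by
      rintro rfl
      simp at h
    exact Or.inl fun y hy => (hT h).trans_lt (hy.1.resolve_left hl)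
  · have hl : l ≠ Fin.last Q := by
      rintro rfl
      simp [Fin.lt_def] at h
      omega
    refine Or.inr (disjoint_left.2 fun y hy hyi => ?_)
    exact not_lt.2 ((hy.2.resolve_left hl).trans (hT (Fin.castSucc_lt_iff_succ_le.1 h))) hyi

lemma sum_abs_cellGap_gridCell_le {f : ℝ → ℝ} (hf0 : ∀ x, 0 ≤ f x) (hfi : Integrable f)
    (hf1 : ∫ x, f x = 1) (hfe : Integrable fun x => exp x * f x) (hQ : Q ≠ 0)
    (hT : StrictMono T) {m : ℝ} (hm0 : 0 ≤ m)
    (hm : ∀ l : Fin (Q + 1), l ≠ 0 → l ≠ Fin.last Q → T l.succ - T l.castSucc ≤ m)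
    {b : Fin (Q + 1) → ℝ} (hb0 : ∀ l, 0 ≤ b l)
    (hb : ∀ l, b l * (T l.succ - T l.castSucc) = ∫ y in gridCell T l, f y) :
    ∑ l, |cellGap f (gridCell T l) (T l.castSucc) (T l.succ) (b l)| ≤
      exp (T 1) + (exp m - 1) * (∫ x, exp x * f x) +
        exp (T (Fin.last Q).succ - T (Fin.last Q).castSucc) *
          ∫ y in Ioi (T (Fin.last Q).castSucc), exp y * f y := by
  set G : Fin (Q + 1) → ℝ := fun l => ∫ y in gridCell T l, exp y * f y
  set tail := exp (T (Fin.last Q).succ - T (Fin.last Q).castSucc) *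
    ∫ y in Ioi (T (Fin.last Q).castSucc), exp y * f y
  have hG0 : ∀ l, 0 ≤ G l := fun l =>
    setIntegral_nonneg (measurableSet_gridCell l) fun y _ => mul_nonneg (exp_pos y).le (hf0 y)
  have hwidth : ∀ l : Fin (Q + 1), T l.castSucc ≤ T l.succ :=
    fun l => hT.monotone Fin.castSucc_lt_succ.le
  have hlast : Fin.last Q ≠ 0 := by simpa [Fin.ext_iff] using hQ
  have hcell : ∀ l, |cellGap f (gridCell T l) (T l.castSucc) (T l.succ) (b l)| ≤
      (if l = 0 then exp (T 1) else 0) + (if l = Fin.last Q then tail else 0) +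
        (exp m - 1) * G l := by
    intro l
    have hmG : 0 ≤ (exp m - 1) * G l := mul_nonneg (by simpa using hm0) (hG0 l)
    by_cases h0 : l = 0
    · subst h0
      have hF : ∫ y in gridCell T 0, f y ≤ 1 :=
        hf1 ▸ setIntegral_le_integral hfi (Eventually.of_forall hf0)
      have hgap := abs_cellGap_le_of_subset_Iic hf0 hfi hfe (measurableSet_gridCell 0) (hb0 0)
        (hb 0) fun _ hy => hy.2.resolve_left hlast.symm
      rw [Fin.succ_zero_eq_one] at hgap ⊢
      rw [if_pos rfl, if_neg hlast.symm]
      nlinarith [exp_pos (T 1)]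
    by_cases hl : l = Fin.last Q
    · subst hl
      have hgap := abs_cellGap_le_of_subset_Ici hf0 hfi hfe (measurableSet_gridCell _) (hb0 _)
        (hb _) (fun _ hy => (hy.1.resolve_left hlast).le) (hwidth _)
      have htail :
          exp (T (Fin.last Q).succ - T (Fin.last Q).castSucc) * G (Fin.last Q) = tail := by
        simp only [G, tail, gridCell_last hQ]
      rw [if_neg hlast, if_pos rfl]
      linarith
    · have hgap := abs_cellGap_le_of_subset_Icc hf0 hfi hfe (measurableSet_gridCell l) (hb0 l)
        (hb l) (fun _ hy => ⟨(hy.1.resolve_left h0).le, hy.2.resolve_left hl⟩) (hwidth l)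
      have hmesh : (exp (T l.succ - T l.castSucc) - 1) * G l ≤ (exp m - 1) * G l :=
        mul_le_mul_of_nonneg_right (by gcongr; exact hm l h0 hl) (hG0 l)
      rw [if_neg h0, if_neg hl]
      linarith
  have hGsum : ∑ l, G l = ∫ x, exp x * f x :=
    (integral_eq_sum_setIntegral measurableSet_gridCell
      (pairwise_disjoint_gridCell hT.monotone) iUnion_gridCell hfe).symm
  refine (Finset.sum_le_sum fun l _ => hcell l).trans_eq ?_
  simp only [Finset.sum_add_distrib, Finset.sum_ite_eq', Finset.mem_univ, if_true,
    ← Finset.mul_sum, hGsum]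
  ring

end Grid

lemma setIntegral_Iio_sub_exp_mul (t κ : ℝ) (φ : ℝ → ℝ) :
    ∫ y in Iio t, (κ - exp y) * φ y = -∫ y in Iic t, (exp y - κ) * φ y := by
  rw [setIntegral_congr_set Iio_ae_eq_Iic, ← integral_neg]
  congr 1 with y
  ring

theorem exists_stepDensity_price_errors_le {f : ℝ → ℝ} (hf0 : ∀ x, 0 ≤ f x)
    (hfi : Integrable f) (hf1 : ∫ x, f x = 1) (hfe : Integrable fun x => exp x * f x)
    {Q : ℕ} (hQ : 1 ≤ Q) {K : Fin (Q + 2) → ℝ} (hK : ∀ j, 0 < K j) (hKmono : StrictMono K)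
    {c : ℝ} (hc : K (Fin.last Q).succ = c * K (Fin.last Q).castSucc) {m : ℝ} (hm0 : 0 ≤ m)
    (hm : ∀ l : Fin (Q + 1), l ≠ 0 → l ≠ Fin.last Q → log (K l.succ / K l.castSucc) ≤ m) :
    ∃ b : Fin (Q + 1) → ℝ, (∀ l, 0 ≤ b l) ∧
      ∑ l, b l * log (K l.succ / K l.castSucc) = 1 ∧
      ∀ (i : Fin Q) (κ : ℝ),
        |(∫ y in Ioi (log (K i.succ.castSucc)), (exp y - κ) *
            stepDensity (fun l => log (K l.castSucc)) (fun l => log (K l.succ)) b y) -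
          ∫ y in Ioi (log (K i.succ.castSucc)), (exp y - κ) * f y| ≤
          K 1 + (exp m - 1) * (∫ x, exp x * f x) +
            c * ∫ y in Ioi (log (K (Fin.last Q).castSucc)), exp y * f y ∧
        |(∫ y in Iio (log (K i.succ.castSucc)), (κ - exp y) *
            stepDensity (fun l => log (K l.castSucc)) (fun l => log (K l.succ)) b y) -
          ∫ y in Iio (log (K i.succ.castSucc)), (κ - exp y) * f y| ≤
          K 1 + (exp m - 1) * (∫ x, exp x * f x) +
            c * ∫ y in Ioi (log (K (Fin.last Q).castSucc)), exp y * f y := by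
  set T : Fin (Q + 2) → ℝ := fun j => log (K j)
  have hT : StrictMono T := fun i j hij => log_lt_log (hK i) (hKmono hij)
  have hlog_div : ∀ l : Fin (Q + 1), log (K l.succ / K l.castSucc) = T l.succ - T l.castSucc :=
    fun l => log_div (hK _).ne' (hK _).ne'
  have hwidth : ∀ l : Fin (Q + 1), 0 < T l.succ - T l.castSucc :=
    fun l => sub_pos.2 (hT Fin.castSucc_lt_succ)
  set b : Fin (Q + 1) → ℝ := fun l => (∫ y in gridCell T l, f y) / (T l.succ - T l.castSucc)
  have hb : ∀ l, b l * (T l.succ - T l.castSucc) = ∫ y in gridCell T l, f y :=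
    fun l => div_mul_cancel₀ _ (hwidth l).ne'
  have hb0 : ∀ l, 0 ≤ b l := fun l =>
    div_nonneg (setIntegral_nonneg (measurableSet_gridCell l) fun y _ => hf0 y) (hwidth l).le
  have hgaps := sum_abs_cellGap_gridCell_le hf0 hfi hf1 hfe (by omega) hT hm0
    (fun l h0 hl => hlog_div l ▸ hm l h0 hl) hb0 hb
  rw [show T 1 = log (K 1) from rfl, exp_log (hK 1), exp_sub, exp_log (hK _),
    exp_log (hK _), hc, mul_div_cancel_right₀ _ (hK _).ne'] at hgaps
  have herr : ∀ A : Set ℝ, (∀ l, gridCell T l ⊆ A ∨ Disjoint (gridCell T l) A) → ∀ κ : ℝ,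
      |(∫ y in A, (exp y - κ) * stepDensity (fun l => T l.castSucc) (fun l => T l.succ) b y) -
        ∫ y in A, (exp y - κ) * f y| ≤
      K 1 + (exp m - 1) * (∫ x, exp x * f x) +
        c * ∫ y in Ioi (T (Fin.last Q).castSucc), exp y * f y := fun A hA κ =>
    (abs_setIntegral_stepDensity_sub_le hfi hfe measurableSet_gridCell
      (pairwise_disjoint_gridCell hT.monotone) iUnion_gridCell
      (fun _ => (hT Fin.castSucc_lt_succ).le) Ioc_subset_gridCell hb hA κ).trans hgaps
  refine ⟨b, hb0, ?_, fun i κ => ⟨herr _ (gridCell_subset_Ioi_or_disjoint hT.monotone i) κ, ?_⟩⟩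
  · simp only [hlog_div, hb, ← hf1]
    exact (integral_eq_sum_setIntegral measurableSet_gridCell
      (pairwise_disjoint_gridCell hT.monotone) iUnion_gridCell hfi).symm
  · rw [setIntegral_Iio_sub_exp_mul, setIntegral_Iio_sub_exp_mul, neg_sub_neg, abs_sub_comm,
      ← compl_Ioi]
    exact herr _ (fun l => (gridCell_subset_Ioi_or_disjoint hT.monotone i l).symm.imp
      subset_compl_iff_disjoint_right.2 disjoint_compl_right_iff_subset.2) κ

lemma mean_sq_le_sq_of_le {q : ℕ} (hq : 1 ≤ q) {x y x' y' : Fin q → ℝ} {B : ℝ}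
    (hle : ∑ i, x i ^ 2 + ∑ i, y i ^ 2 ≤ ∑ i, x' i ^ 2 + ∑ i, y' i ^ 2)
    (hx' : ∀ i, |x' i| ≤ B) (hy' : ∀ i, |y' i| ≤ B) :
    1 / (2 * (q : ℝ)) * (∑ i, x i ^ 2 + ∑ i, y i ^ 2) ≤ B ^ 2 := by
  have hsum : ∀ z : Fin q → ℝ, (∀ i, |z i| ≤ B) → ∑ i, z i ^ 2 ≤ q * B ^ 2 := fun z hz => by
    refine (Finset.sum_le_card_nsmul _ _ (B ^ 2) fun i _ => ?_).trans_eq (by simp)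
    simpa only [sq_abs] using pow_le_pow_left₀ (abs_nonneg _) (hz i) 2
  have hq' : (0 : ℝ) < 2 * q := by positivity
  rw [one_div_mul_eq_div, div_le_iff₀ hq']
  linarith [hsum x' hx', hsum y' hy']

lemma log_div_le_iSup_log_div {Q : ℕ} (K : Fin (Q + 2) → ℝ) {l : Fin (Q + 1)} (h0 : l ≠ 0)
    (hl : l ≠ Fin.last Q) :
    log (K l.succ / K l.castSucc) ≤
      ⨆ i : Fin (Q - 1), log (K ⟨i.1 + 2, by omega⟩ / K ⟨i.1 + 1, by omega⟩) := by
  have h0' : 0 < l.1 := Fin.pos_iff_ne_zero.2 h0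
  have hl' : l.1 < Q := Fin.val_lt_last hl
  rw [show l.succ = ⟨l.1 - 1 + 2, by omega⟩ from Fin.ext (by simp; omega),
    show l.castSucc = ⟨l.1 - 1 + 1, by omega⟩ from Fin.ext (by simp; omega)]
  exact le_ciSup
    (f := fun i : Fin (Q - 1) => log (K ⟨i.1 + 2, by omega⟩ / K ⟨i.1 + 1, by omega⟩))
    (Finite.bddAbove_range _) ⟨l.1 - 1, by omega⟩

lemma iSup_log_div_nonneg {Q : ℕ} {K : Fin (Q + 2) → ℝ} (hK : ∀ j, 0 < K j)
    (hKmono : Monotone K) :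
    0 ≤ ⨆ i : Fin (Q - 1), log (K ⟨i.1 + 2, by omega⟩ / K ⟨i.1 + 1, by omega⟩) :=
  Real.iSup_nonneg fun _ => log_nonneg ((one_le_div (hK _)).2 (hKmono (by simp [Fin.le_def])))

/-- Theorem 3.1: consistency of the piecewise constant least squares
estimator of the risk-neutral density for recovering option prices, as the strike
grid refines and extends (`K_1 → 0`, `K_q → ∞`, `q → ∞`, mesh `→ 0`). -/
theorem stmt_9
    -- the risk-neutral density
    (f : ℝ → ℝ) (hf_nonneg : ∀ x, 0 ≤ f x)
    (hf_int : Integrable f) (hf_one : (∫ x, f x) = 1)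
    (hf_exp : Integrable (fun x => Real.exp x * f x))
    (R : ℝ) (c : ℝ)
    -- a sequence of strike grids K_0 = K_1/c < K_1 < ... < K_q < K_{q+1} = c K_q
    (q : ℕ → ℕ) (hq1 : ∀ n, 1 ≤ q n)
    (K : (n : ℕ) → Fin (q n + 2) → ℝ)
    (hKpos : ∀ n i, 0 < K n i) (hKmono : ∀ n, StrictMono (K n))
    (hKlast : ∀ n, K n (Fin.last (q n + 1)) = c * K n ⟨q n, by omega⟩)
    -- asymptotic regime: K_1 → 0, K_q → ∞, q → ∞, mesh |Δ| → 0
    (hK1 : Tendsto (fun n => K n 1) atTop (nhds 0))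
    (hKq : Tendsto (fun n => K n ⟨q n, by omega⟩) atTop atTop)
    (hmesh : Tendsto (fun n => ⨆ i : Fin (q n - 1),
      Real.log (K n ⟨i.1 + 2, by omega⟩ / K n ⟨i.1 + 1, by omega⟩)) atTop (nhds 0))
    -- market prices of calls and puts with strikes K_1, ..., K_q
    (Ctil Ptil : (n : ℕ) → Fin (q n) → ℝ)
    (hCtil : ∀ n i, Ctil n i = Real.exp (-R) *
      ∫ y in Set.Ioi (Real.log (K n i.succ.castSucc)),
        (Real.exp y - K n i.succ.castSucc) * f y)
    (hPtil : ∀ n i, Ptil n i = Real.exp (-R) *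
      ∫ y in Set.Iio (Real.log (K n i.succ.castSucc)),
        (K n i.succ.castSucc - Real.exp y) * f y)
    -- estimated prices computed from a step density with coefficients b
    (Chat Phat : (n : ℕ) → (Fin (q n + 1) → ℝ) → Fin (q n) → ℝ)
    (hChat : ∀ n b i, Chat n b i = Real.exp (-R) *
      ∫ y in Set.Ioi (Real.log (K n i.succ.castSucc)),
        (Real.exp y - K n i.succ.castSucc) *
          ∑ l : Fin (q n + 1),
            Set.indicator (Set.Ioc (Real.log (K n l.castSucc)) (Real.log (K n l.succ)))
              (fun _ => b l) y)
    (hPhat : ∀ n b i, Phat n b i = Real.exp (-R) *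
      ∫ y in Set.Iio (Real.log (K n i.succ.castSucc)),
        (K n i.succ.castSucc - Real.exp y) *
          ∑ l : Fin (q n + 1),
            Set.indicator (Set.Ioc (Real.log (K n l.castSucc)) (Real.log (K n l.succ)))
              (fun _ => b l) y)
    -- the least squares objective over admissible step densities
    (L : (n : ℕ) → (Fin (q n + 1) → ℝ) → ℝ)
    (hL : ∀ n b, L n b = (∑ i : Fin (q n), (Chat n b i - Ctil n i) ^ 2) +
      ∑ i : Fin (q n), (Phat n b i - Ptil n i) ^ 2)
    -- a : the least squares minimizer among nonnegative step densities of unit mass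
    (a : (n : ℕ) → Fin (q n + 1) → ℝ)
    (ha_min : ∀ n, ∀ b : Fin (q n + 1) → ℝ, (∀ l, 0 ≤ b l) →
      (∑ l : Fin (q n + 1), b l * Real.log (K n l.succ / K n l.castSucc)) = 1 →
      L n (a n) ≤ L n b) :
    Tendsto (fun n => (1 / (2 * (q n : ℝ))) *
      ((∑ i : Fin (q n), (Chat n (a n) i - Ctil n i) ^ 2) +
        ∑ i : Fin (q n), (Phat n (a n) i - Ptil n i) ^ 2)) atTop (nhds 0) := by
  set mesh : ℕ → ℝ := fun n => ⨆ i : Fin (q n - 1),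
    log (K n ⟨i.1 + 2, by omega⟩ / K n ⟨i.1 + 1, by omega⟩)
  set E : ℕ → ℝ := fun n => K n 1 + (exp (mesh n) - 1) * (∫ x, exp x * f x) +
    c * ∫ y in Ioi (log (K n ⟨q n, by omega⟩)), exp y * f y
  have hE : Tendsto E atTop (nhds 0) := by
    have hexp : Tendsto (fun n => exp (mesh n) - 1) atTop (nhds 0) := by
      simpa using ((continuous_exp.tendsto 0).comp hmesh).sub_const 1
    have htail := tendsto_integral_Ioi_zero (f := fun y => exp y * f y) (μ := volume)
      (tendsto_log_atTop.comp hKq)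
    simpa using (hK1.add (hexp.mul_const _)).add (htail.const_mul c)
  refine squeeze_zero (fun n => by positivity) (fun n => ?_)
    (by simpa using (hE.const_mul (exp (-R))).pow 2)
  obtain ⟨b, hb0, hb1, herr⟩ := exists_stepDensity_price_errors_le hf_nonneg hf_int hf_one
    hf_exp (hq1 n) (hKpos n) (hKmono n) (hKlast n)
    (iSup_log_div_nonneg (hKpos n) (hKmono n).monotone)
    fun l h0 hl => log_div_le_iSup_log_div (K n) h0 hl
  refine mean_sq_le_sq_of_le (hq1 n) (by simpa only [hL] using ha_min n b hb0 hb1)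
    (fun i => ?_) (fun i => ?_)
  · rw [hChat, hCtil, ← mul_sub, abs_mul, abs_of_pos (exp_pos _)]
    exact mul_le_mul_of_nonneg_left (herr i _).1 (exp_pos _).le
  · rw [hPhat, hPtil, ← mul_sub, abs_mul, abs_of_pos (exp_pos _)]
    exact mul_le_mul_of_nonneg_left (herr i _).2 (exp_pos _).le
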